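/- For every connected graph G, the algebraic connectivity λ₂(G) is at most the vertex connectivity κ(G). -/

import Mathlib

open Matrix BigOperators

variable {V : Type*} [Fintype V] [DecidableEq V]

/-- The algebraic connectivity: the second smallest Laplacian eigenvalue, characterized
as the minimum Rayleigh quotient over nonzero vectors orthogonal to the all-ones vector. -/
noncomputable def algConn (G : SimpleGraph V) [DecidableRel G.Adj] : ℝ :=
  sInf {r : ℝ | ∃ x : V → ℝ, x ≠ 0 ∧ (∑ v, x v) = 0 ∧
    r = (x ⬝ᵥ (G.lapMatrix ℝ) *ᵥ x) / (x ⬝ᵥ x)}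

/-- The vertex connectivity: the minimum number of vertices whose removal leaves a
disconnected or trivial graph. -/
noncomputable def vertexConn (G : SimpleGraph V) : ℕ :=
  sInf {k : ℕ | ∃ s : Finset V, s.card = k ∧
    (¬ (G.induce ((↑s : Set V)ᶜ)).Connected ∨ Fintype.card V ≤ k + 1)}


/-!
Let `s` be a minimum vertex cut; since `G` is not complete, removing `s` splits the remaining
vertices into two nonempty sides `A` and `B` with no edges between them. The test vector equal to
`#B` on `A`, to `-#A` on `B` and to `0` on `s` is orthogonal to the all-ones vector, and in its
Laplacian form `∑_{ij ∈ E} (x i - x j)²` only edges meeting `s` contribute. An edge from `i ∈ s`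
to `j` contributes `(x j)²`, so the form is at most `#s · ∑ (x j)²`, and the Rayleigh quotient of
`x` is at most `#s = κ(G)`.
-/

open Finset SimpleGraph

theorem dotProduct_lapMatrix_mulVec_le_card_mul (G : SimpleGraph V) [DecidableRel G.Adj]
    (s : Finset V) (x : V → ℝ) (hs : ∀ i ∈ s, x i = 0)
    (hadj : ∀ i j, G.Adj i j → i ∉ s → j ∉ s → x i = x j) :
    x ⬝ᵥ G.lapMatrix ℝ *ᵥ x ≤ #s * (x ⬝ᵥ x) := by
  have hedge : ∀ i j, (if G.Adj i j then (x i - x j) ^ 2 else 0) ≤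
      (if i ∈ s then x j ^ 2 else 0) + (if j ∈ s then x i ^ 2 else 0) := by
    intro i j
    by_cases hij : G.Adj i j
    · by_cases hi : i ∈ s <;> by_cases hj : j ∈ s <;>
        simp [hij, hi, hj, hs, hadj i j hij]
    · simp only [hij, if_false]
      positivity
  have hcount : ∑ i, ∑ j, ((if i ∈ s then x j ^ 2 else 0) + (if j ∈ s then x i ^ 2 else 0)) =
      2 * (#s * (x ⬝ᵥ x)) := by
    simp only [sum_add_distrib, dotProduct, ← sq]
    rw [sum_comm (f := fun i j => if j ∈ s then x i ^ 2 else 0)]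
    simp only [sum_ite_irrel, sum_const_zero, sum_ite_mem, univ_inter, sum_const, nsmul_eq_mul]
    ring
  calc x ⬝ᵥ G.lapMatrix ℝ *ᵥ x
      = (∑ i, ∑ j, if G.Adj i j then (x i - x j) ^ 2 else 0) / 2 := by
        rw [← toLinearMap₂'_apply', lapMatrix_toLinearMap₂']
    _ ≤ (∑ i, ∑ j, ((if i ∈ s then x j ^ 2 else 0) + (if j ∈ s then x i ^ 2 else 0))) / 2 := by
        gcongr with i _ j _
        exact hedge i j
    _ = #s * (x ⬝ᵥ x) := by rw [hcount]; ring

theorem algConn_le_rayleigh (G : SimpleGraph V) [DecidableRel G.Adj] {x : V → ℝ} (hx : x ≠ 0)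
    (hsum : ∑ v, x v = 0) :
    algConn G ≤ (x ⬝ᵥ G.lapMatrix ℝ *ᵥ x) / (x ⬝ᵥ x) := by
  refine csInf_le ⟨0, ?_⟩ ⟨x, hx, hsum, rfl⟩
  rintro _ ⟨y, -, -, rfl⟩
  exact div_nonneg ((posSemidef_lapMatrix ℝ G).dotProduct_mulVec_nonneg y)
    (Finset.sum_nonneg fun i _ => mul_self_nonneg _)

theorem algConn_le_card_of_separation (G : SimpleGraph V) [DecidableRel G.Adj]
    {s A B : Finset V} (hA : A.Nonempty) (hB : B.Nonempty) (hAB : Disjoint A B)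
    (hcover : A ∪ B = sᶜ) (hnadj : ∀ i ∈ A, ∀ j ∈ B, ¬ G.Adj i j) :
    algConn G ≤ #s := by
  set x : V → ℝ := fun w => (if w ∈ A then (#B : ℝ) else 0) - (if w ∈ B then (#A : ℝ) else 0)
  have hxA : ∀ w ∈ A, x w = #B := fun w hw => by simp [x, hw, disjoint_left.1 hAB hw]
  have hxB : ∀ w ∈ B, x w = -#A := fun w hw => by simp [x, hw, disjoint_right.1 hAB hw]
  have hsAB : ∀ w, w ∈ A ∪ B ↔ w ∉ s := fun w => by rw [hcover, mem_compl]
  have hx : x ≠ 0 := by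
    obtain ⟨a, ha⟩ := hA
    intro h
    have := congrFun h a
    simp only [hxA a ha, Pi.zero_apply, Nat.cast_eq_zero] at this
    exact hB.card_ne_zero this
  have hsum : ∑ v, x v = 0 := by
    simp [x, sum_sub_distrib, sum_ite_mem, mul_comm]
  have hs : ∀ i ∈ s, x i = 0 := fun i hi => by
    have hiAB : i ∉ A ∧ i ∉ B := by simpa using fun h => (hsAB i).1 h hi
    simp [x, hiAB.1, hiAB.2]
  have hadj : ∀ i j, G.Adj i j → i ∉ s → j ∉ s → x i = x j := by
    intro i j hij hi hj
    rcases mem_union.1 ((hsAB i).2 hi) with hiA | hiB <;>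
      rcases mem_union.1 ((hsAB j).2 hj) with hjA | hjB
    · rw [hxA i hiA, hxA j hjA]
    · exact absurd hij (hnadj i hiA j hjB)
    · exact absurd hij.symm (hnadj j hjA i hiB)
    · rw [hxB i hiB, hxB j hjB]
  have hpos : 0 < x ⬝ᵥ x :=
    (sum_nonneg fun i _ => mul_self_nonneg (x i)).lt_of_ne' (dotProduct_self_eq_zero.not.2 hx)
  calc algConn G ≤ (x ⬝ᵥ G.lapMatrix ℝ *ᵥ x) / (x ⬝ᵥ x) := algConn_le_rayleigh G hx hsum
    _ ≤ #s := by
      rw [div_le_iff₀ hpos]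
      exact dotProduct_lapMatrix_mulVec_le_card_mul G s x hs hadj

theorem exists_separation_of_not_preconnected_induce (G : SimpleGraph V) {s : Finset V}
    (h : ¬ (G.induce ((↑s : Set V)ᶜ)).Preconnected) :
    ∃ A B : Finset V, A.Nonempty ∧ B.Nonempty ∧ Disjoint A B ∧ A ∪ B = sᶜ ∧
      ∀ i ∈ A, ∀ j ∈ B, ¬ G.Adj i j := by
  classical
  set H := G.induce ((↑s : Set V)ᶜ)
  obtain ⟨a, b, hab⟩ : ∃ a b, ¬ H.Reachable a b := by simpa [Preconnected] using h
  set A : Finset V := {w | ∃ hw : w ∈ ((↑s : Set V)ᶜ), H.Reachable a ⟨w, hw⟩}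
  have hAs : A ⊆ sᶜ := fun w hw => by
    obtain ⟨hw, -⟩ := (mem_filter.1 hw).2
    simpa using hw
  refine ⟨A, sᶜ \ A, ⟨a, ?_⟩, ⟨b, ?_⟩, disjoint_sdiff, union_sdiff_of_subset hAs, ?_⟩
  · exact mem_filter.2 ⟨mem_univ _, a.2, Reachable.refl _⟩
  · have hb : (b : V) ∉ s := b.2
    refine mem_sdiff.2 ⟨mem_compl.2 hb, fun hbA => hab ?_⟩
    obtain ⟨-, _, hr⟩ := mem_filter.1 hbA
    exact hr
  · intro i hi j hj hij
    obtain ⟨_, hr⟩ := (mem_filter.1 hi).2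
    obtain ⟨hjs, hjA⟩ := mem_sdiff.1 hj
    have hj' : j ∈ ((↑s : Set V)ᶜ) := by simpa using hjs
    exact hjA (mem_filter.2 ⟨mem_univ _, hj', hr.trans (Adj.reachable (G := H) hij)⟩)

theorem not_preconnected_induce_pair {W : Type*} (G : SimpleGraph W) {u v : W} (huv : u ≠ v)
    (hnadj : ¬ G.Adj u v) : ¬ (G.induce ({u, v} : Set W)).Preconnected := by
  have hnadj' : ¬ G.Adj v u := fun h => hnadj h.symm
  have hbot : G.induce ({u, v} : Set W) = ⊥ := by
    ext ⟨x, hx⟩ ⟨y, hy⟩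
    simp only [Set.mem_insert_iff, Set.mem_singleton_iff] at hx hy
    rcases hx with rfl | rfl <;> rcases hy with rfl | rfl <;>
      simp [hnadj, hnadj']
  intro hp
  have := hp ⟨u, by simp⟩ ⟨v, by simp⟩
  rw [hbot, reachable_bot] at this
  exact huv (congrArg Subtype.val this)

theorem exists_card_eq_vertexConn_of_ne_top (G : SimpleGraph V) (hG : G ≠ ⊤) :
    ∃ s : Finset V, #s = vertexConn G ∧ ¬ (G.induce ((↑s : Set V)ᶜ)).Preconnected := by
  obtain ⟨u, v, huv, hnadj⟩ := ne_top_iff_exists_not_adj.1 hG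
  have hpair : Fintype.card V - 2 ∈ {k : ℕ | ∃ s : Finset V, #s = k ∧
      (¬ (G.induce ((↑s : Set V)ᶜ)).Connected ∨ Fintype.card V ≤ k + 1)} := by
    refine ⟨{u, v}ᶜ, by rw [card_compl, card_pair huv], Or.inl fun hc => ?_⟩
    have hp := hc.preconnected
    rw [coe_compl, compl_compl, coe_pair] at hp
    exact not_preconnected_induce_pair G huv hnadj hp
  obtain ⟨s, hs, hsep⟩ : ∃ s : Finset V, #s = vertexConn G ∧
      (¬ (G.induce ((↑s : Set V)ᶜ)).Connected ∨ Fintype.card V ≤ vertexConn G + 1) :=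
    Nat.sInf_mem ⟨_, hpair⟩
  have hle : #s ≤ Fintype.card V - 2 := hs ▸ Nat.sInf_le hpair
  have htwo : 2 ≤ Fintype.card V := by
    rw [← card_pair huv]; exact card_le_univ _
  refine ⟨s, hs, fun hp => ?_⟩
  obtain ⟨w, hw⟩ : (sᶜ : Finset V).Nonempty := by rw [← card_pos, card_compl]; omega
  have : Nonempty ↥((↑s : Set V)ᶜ) := ⟨⟨w, by simpa using hw⟩⟩
  rcases hsep with hdis | htriv
  · exact hdis ⟨hp⟩
  · omega

theorem algConn_le_card_of_not_preconnected_induce (G : SimpleGraph V) [DecidableRel G.Adj]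
    {s : Finset V} (h : ¬ (G.induce ((↑s : Set V)ᶜ)).Preconnected) : algConn G ≤ #s := by
  obtain ⟨A, B, hA, hB, hAB, hcover, hnadj⟩ := exists_separation_of_not_preconnected_induce G h
  exact algConn_le_card_of_separation G hA hB hAB hcover hnadj

theorem stmt3_general (G : SimpleGraph V) [DecidableRel G.Adj]
    (hnc : G ≠ ⊤) :
    algConn G ≤ (vertexConn G : ℝ) := by
  obtain ⟨s, hs, hsep⟩ := exists_card_eq_vertexConn_of_ne_top G hnc
  exact hs ▸ algConn_le_card_of_not_preconnected_induce G hsep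

theorem stmt3 (G : SimpleGraph V) [DecidableRel G.Adj] (hG : G.Connected)
    (hnc : G ≠ ⊤) :
    algConn G ≤ (vertexConn G : ℝ) :=
  stmt3_general G hnc
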